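/- arXiv:2504.16624 — 2 statements merged into one kernel-verified Lean document; each statement's English description precedes it below -/
import Mathlib

section
/- A distribution Ω models an observation function Obs if and only if there exists no counter-example to Ω ⊨ Obs, i.e., no pair (σ_N, P) where Obs(σ_N)=−, P assigns to each Σ_i ∈ Ω a trace σ_{Σ_i} ∈ Dom(Obs) with Obs(σ_{Σ_i})=+ and proj(σ_N, Σ_i) = proj(σ_{Σ_i}, Σ_i). -/
open Classical in
/-- Projection of a trace onto a sub-alphabet. -/
noncomputable def proj {A : Type*} (s : Set A) : List A → List A
  | [] => []
  | a :: σ => if a ∈ s then a :: proj s σ else proj s σ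

/-- A distribution of the alphabet `A`: a family of sub-alphabets covering `A`. -/
def AlphabetDistribution {A : Type*} (Ω : Set (Set A)) : Prop := ⋃₀ Ω = Set.univ

/-- A language agrees with an observation function (`L ⊨ Obs`). -/
def Agrees {A : Type*} (L : Set (List A)) (Obs : List A → Option Bool) : Prop :=
  ∀ σ b, Obs σ = some b → (σ ∈ L ↔ b = true)

/-- `L` is a product language over the distribution `Ω`: it is the parallel
composition of a family of languages over the component alphabets. -/
def ProductLang {A : Type*} (Ω : Set (Set A)) (L : Set (List A)) : Prop :=
  ∃ Ls : Set A → Set (List A),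
    (∀ s ∈ Ω, ∀ σ ∈ Ls s, ∀ a ∈ σ, a ∈ s) ∧
    L = {σ | ∀ s ∈ Ω, proj s σ ∈ Ls s}

/-- `Ω ⊨ Obs`: some product language over `Ω` agrees with `Obs`. -/
def Models {A : Type*} (Ω : Set (Set A)) (Obs : List A → Option Bool) : Prop :=
  ∃ L, ProductLang Ω L ∧ Agrees L Obs

/-- A counter-example to `Ω ⊨ Obs`: a negative observation `σN` together with,
for each component alphabet, a positive observation with matching projection. -/
def IsCED {A : Type*} (Ω : Set (Set A)) (Obs : List A → Option Bool)
    (σN : List A) (P : Set A → List A) : Prop :=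
  Obs σN = some false ∧
  ∀ s ∈ Ω, Obs (P s) = some true ∧ proj s σN = proj s (P s)

/-- The connectivity preorder: `Ω` is less connecting than `Ω'`. -/
def lessConn {A : Type*} (Ω Ω' : Set (Set A)) : Prop :=
  ∀ s ∈ Ω, ∃ t ∈ Ω', s ⊆ t

/-!
A product language contains every trace whose projections all agree with projections of its
members, so a counter-example forces the negative trace into any agreeing product language.
Conversely, the product of the projections of the positive observations is the least product
language containing them; a negative observation inside it, together with the positive traces
witnessing its projections, is exactly a counter-example.
-/

theorem mem_of_mem_proj {A : Type*} {s : Set A} {σ : List A} {a : A} (h : a ∈ proj s σ) :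
    a ∈ s := by
  induction σ with
  | nil => simp [proj] at h
  | cons b σ ih =>
    by_cases hb : b ∈ s
    · rw [proj, if_pos hb, List.mem_cons] at h
      exact h.elim (· ▸ hb) ih
    · rw [proj, if_neg hb] at h
      exact ih h

theorem ProductLang.mem_of_forall_proj_eq {A : Type*} {Ω : Set (Set A)} {L : Set (List A)}
    (hL : ProductLang Ω L) {σ : List A}
    (h : ∀ s ∈ Ω, ∃ τ ∈ L, proj s σ = proj s τ) : σ ∈ L := by
  obtain ⟨Ls, -, rfl⟩ := hL
  intro s hs
  obtain ⟨τ, hτ, hproj⟩ := h s hs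
  exact hproj ▸ hτ s hs

theorem not_isCED_of_productLang_agrees {A : Type*} {Ω : Set (Set A)} {L : Set (List A)}
    {Obs : List A → Option Bool} (hL : ProductLang Ω L) (hAg : Agrees L Obs)
    (σN : List A) (P : Set A → List A) : ¬ IsCED Ω Obs σN P := by
  rintro ⟨hneg, hP⟩
  have hσN : σN ∈ L := hL.mem_of_forall_proj_eq fun s hs =>
    ⟨P s, (hAg _ true (hP s hs).1).mpr rfl, (hP s hs).2⟩
  simpa using (hAg σN false hneg).mp hσN

def positiveProj {A : Type*} (Obs : List A → Option Bool) (s : Set A) : Set (List A) :=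
  {τ | ∃ σ, Obs σ = some true ∧ proj s σ = τ}

def positiveClosure {A : Type*} (Ω : Set (Set A)) (Obs : List A → Option Bool) :
    Set (List A) :=
  {σ | ∀ s ∈ Ω, proj s σ ∈ positiveProj Obs s}

theorem productLang_positiveClosure {A : Type*} (Ω : Set (Set A))
    (Obs : List A → Option Bool) : ProductLang Ω (positiveClosure Ω Obs) := by
  refine ⟨positiveProj Obs, ?_, rfl⟩
  rintro s - - ⟨σ, -, rfl⟩ a ha
  exact mem_of_mem_proj ha

theorem mem_positiveClosure_of_pos {A : Type*} {Ω : Set (Set A)} {Obs : List A → Option Bool}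
    {σ : List A} (hσ : Obs σ = some true) : σ ∈ positiveClosure Ω Obs :=
  fun _ _ => ⟨σ, hσ, rfl⟩

theorem exists_isCED_of_mem_positiveClosure {A : Type*} {Ω : Set (Set A)}
    {Obs : List A → Option Bool} {σN : List A} (hneg : Obs σN = some false)
    (hσN : σN ∈ positiveClosure Ω Obs) : ∃ P, IsCED Ω Obs σN P := by
  have witness : ∀ s, ∃ τ, s ∈ Ω → Obs τ = some true ∧ proj s σN = proj s τ := by
    intro s
    by_cases hs : s ∈ Ω
    · obtain ⟨τ, hτ, hproj⟩ := hσN s hs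
      exact ⟨τ, fun _ => ⟨hτ, hproj.symm⟩⟩
    · exact ⟨σN, fun h => absurd h hs⟩
  choose P hP using witness
  exact ⟨P, hneg, hP⟩

theorem agrees_positiveClosure_of_no_ced {A : Type*} {Ω : Set (Set A)}
    {Obs : List A → Option Bool} (hno : ¬ ∃ σN P, IsCED Ω Obs σN P) :
    Agrees (positiveClosure Ω Obs) Obs := by
  rintro σ (_ | _) hσ
  · simp only [Bool.false_eq_true, iff_false]
    exact fun hmem => hno ⟨σ, exists_isCED_of_mem_positiveClosure hσ hmem⟩
  · simpa using mem_positiveClosure_of_pos hσ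

theorem models_iff_no_ced_general {A : Type*} (Ω : Set (Set A))
    (Obs : List A → Option Bool) :
    Models Ω Obs ↔ ¬ ∃ (σN : List A) (P : Set A → List A), IsCED Ω Obs σN P := by
  constructor
  · rintro ⟨L, hL, hAg⟩ ⟨σN, P, hCED⟩
    exact not_isCED_of_productLang_agrees hL hAg σN P hCED
  · exact fun hno =>
      ⟨_, productLang_positiveClosure Ω Obs, agrees_positiveClosure_of_no_ced hno⟩

/-- `Ω ⊨ Obs` iff there is no counter-example to the distribution. -/
theorem models_iff_no_ced {A : Type*} (Ω : Set (Set A)) (hΩ : AlphabetDistribution Ω)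
    (Obs : List A → Option Bool) (hfin : {σ | Obs σ ≠ none}.Finite) :
    Models Ω Obs ↔ ¬ ∃ (σN : List A) (P : Set A → List A), IsCED Ω Obs σN P :=
  models_iff_no_ced_general Ω Obs
end

section
/- For any distribution Ω and observation function Obs, the canonical distribution can(Ω), obtained by removing all alphabets strictly contained in another alphabet of Ω, has no counter-example if and only if Ω has no counter-example: CED(can(Ω), Obs) = ∅ ⟺ CED(Ω, Obs) = ∅. -/
/-- The canonical distribution: remove all alphabets strictly contained in another. -/
def canon {A : Type*} (Ω : Set (Set A)) : Set (Set A) :=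
  Ω \ {s ∈ Ω | ∃ t ∈ Ω, s ⊂ t}

lemma proj_proj_of_subset {A : Type*} {s t : Set A} (hst : s ⊆ t) (σ : List A) :
    proj s (proj t σ) = proj s σ := by
  induction σ with
  | nil => simp [proj]
  | cons a σ ih =>
    by_cases hat : a ∈ t
    · by_cases has : a ∈ s <;> simp [proj, hat, has, ih]
    · have has : a ∉ s := fun h => hat (hst h)
      simp [proj, hat, has, ih]

lemma proj_eq_of_subset {A : Type*} {s t : Set A} (hst : s ⊆ t) {σ τ : List A}
    (h : proj t σ = proj t τ) : proj s σ = proj s τ := by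
  rw [← proj_proj_of_subset hst σ, h, proj_proj_of_subset hst τ]

lemma canon_subset {A : Type*} (Ω : Set (Set A)) : canon Ω ⊆ Ω :=
  Set.sdiff_subset

lemma lessConn_canon {A : Type*} {Ω : Set (Set A)} (hΩ : Ω.Finite) : lessConn Ω (canon Ω) := by
  intro s hs
  obtain ⟨t, hst, ht⟩ := hΩ.exists_le_maximal hs
  exact ⟨t, ⟨ht.prop, fun ⟨_, u, hu, htu⟩ => ht.not_ssuperset hu htu⟩, hst⟩

namespace IsCED

variable {A : Type*} {Ω Ω' : Set (Set A)} {Obs : List A → Option Bool} {σN : List A}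
  {P : Set A → List A}

lemma of_subset (h : IsCED Ω' Obs σN P) (hΩ : Ω ⊆ Ω') : IsCED Ω Obs σN P :=
  ⟨h.1, fun s hs => h.2 s (hΩ hs)⟩

/-- Each component reuses the positive observation of a component containing it, since projections
onto the larger alphabet determine those onto the smaller one. -/
lemma of_lessConn (h : IsCED Ω' Obs σN P) (hΩ : lessConn Ω Ω') :
    ∃ P' : Set A → List A, IsCED Ω Obs σN P' := by
  choose! f hf hsub using hΩ
  refine ⟨P ∘ f, h.1, fun s hs => ?_⟩
  obtain ⟨hpos, hproj⟩ := h.2 (f s) (hf s hs)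
  exact ⟨hpos, proj_eq_of_subset (hsub s hs) hproj⟩

end IsCED

theorem canon_ced_empty_iff_general {A : Type*} (Ω : Set (Set A))
    (hfinΩ : Ω.Finite) (Obs : List A → Option Bool) :
    (¬ ∃ (σN : List A) (P : Set A → List A), IsCED (canon Ω) Obs σN P) ↔
      (¬ ∃ (σN : List A) (P : Set A → List A), IsCED Ω Obs σN P) := by
  refine not_congr ⟨?_, ?_⟩
  · rintro ⟨σN, P, h⟩
    exact ⟨σN, h.of_lessConn (lessConn_canon hfinΩ)⟩
  · rintro ⟨σN, P, h⟩
    exact ⟨σN, P, h.of_subset (canon_subset Ω)⟩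

/-- The canonical distribution has no counter-example iff the original has none. -/
theorem canon_ced_empty_iff {A : Type*} (Ω : Set (Set A)) (hΩ : AlphabetDistribution Ω)
    (hfinΩ : Ω.Finite) (Obs : List A → Option Bool) :
    (¬ ∃ (σN : List A) (P : Set A → List A), IsCED (canon Ω) Obs σN P) ↔
      (¬ ∃ (σN : List A) (P : Set A → List A), IsCED Ω Obs σN P) :=
  canon_ced_empty_iff_general Ω hfinΩ Obs
end
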